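/- arXiv:math/9908149 — 2 statements merged into one kernel-verified Lean document; each statement's English description precedes it below -/
import Mathlib

section
/- Condition Number Theorem for Graeffe iteration: let f be a monic degree-d complex polynomial with roots ζ₁,...,ζ_d, no two of which have the same modulus. Define ρ(f) = min over pairs with |ζᵢ| < |ζⱼ| of (1 - |ζᵢ|/|ζⱼ|), and let Σ_G be the set of degree-d polynomials having two distinct roots of equal modulus. Then the projective distance d_P(f, Σ_G) = min_{h ∈ Σ_G, λ ∈ ℂ} ‖f - λh‖_d / ‖f‖_d satisfies ρ(f) ≥ d_P(f, Σ_G)/√d. -/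
open Polynomial Finset

/-- The Weyl (Bombieri) norm on polynomials of degree at most `m`. -/
noncomputable def weylNorm (m : ℕ) (p : Polynomial ℂ) : ℝ :=
  Real.sqrt (∑ i ∈ Finset.range (m + 1), ‖p.coeff i‖ ^ 2 / (Nat.choose m i))

/-- `Σ_G`: the locus of ill-posed problems, i.e. degree-`d` polynomials having
two distinct roots of equal modulus. -/
def SigmaG (d : ℕ) : Set (Polynomial ℂ) :=
  {h | h.natDegree = d ∧ ∃ z w : ℂ, z ≠ w ∧ h.IsRoot z ∧ h.IsRoot w ∧
    ‖z‖ = ‖w‖}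

/-!
Let `|ζᵢ| < |ζⱼ|` and write `f = (X - ζⱼ) g`. For every `w ≠ ζᵢ` on the circle `|w| = |ζᵢ|`, the
polynomial `h = (X - w) g` lies in `Σ_G` (it vanishes at `w` and `ζᵢ`) and `f - h = (w - ζⱼ) g`.
Letting `w` tend to `(|ζᵢ|/|ζⱼ|) ζⱼ` gives `d_P(f, Σ_G) ‖f‖_d ≤ (|ζⱼ| - |ζᵢ|) ‖g‖_d`, and the
theorem follows from `|z| ‖g‖_d ≤ √d ‖(X - z) g‖_d` for `deg g < d`. The latter comes from
`(1 + |z|²) ‖g‖²_{d-1} ≤ d ‖(X - z) g‖²_d`, whose defect is a sum of squares: after the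
triangle inequality on each coefficient `gₖ - z gₖ₊₁`, it is a telescoping sum of the squares
`((d-1-k) |z| |gₖ| - (k+1) |gₖ₊₁|)²`, up to positive weights.
-/

theorem one_add_sq_mul_sum_sq_div_choose_le (n : ℕ) (r : ℝ) (x : ℕ → ℝ) (hx : x (n + 1) = 0) :
    (1 + r ^ 2) * ∑ i ∈ range (n + 1), x i ^ 2 / n.choose i ≤
      (n + 1) * (r * x 0) ^ 2 +
        ∑ i ∈ range (n + 1), (i + 1) * (x i - r * x (i + 1)) ^ 2 / n.choose i := by
  -- `ψ` makes the termwise comparison telescope; the termwise defect is the square in `hsq`.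
  let ψ : ℕ → ℝ := fun k => (k - (n + 1 - k) * r ^ 2) * x k ^ 2 / n.choose k
  have step : ∀ i ∈ range (n + 1), (1 + r ^ 2) * (x i ^ 2 / n.choose i) ≤
      (i + 1) * (x i - r * x (i + 1)) ^ 2 / n.choose i + (ψ (i + 1) - ψ i) := by
    intro i hi
    have hc : (0 : ℝ) < n.choose i := by exact_mod_cast Nat.choose_pos (mem_range_succ_iff.mp hi)
    rcases (mem_range_succ_iff.mp hi).lt_or_eq with hin | rfl
    · have hk : (0 : ℝ) < n - i := sub_pos.mpr (by exact_mod_cast hin)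
      have hrec : (n.choose (i + 1) : ℝ) * (i + 1) = n.choose i * (n - i) := by
        rw [← Nat.cast_sub hin.le]
        exact_mod_cast Nat.choose_succ_right_eq n i
      have hchoose : (n.choose (i + 1) : ℝ) = n.choose i * (n - i) / (i + 1) :=
        eq_div_of_mul_eq (by positivity) hrec
      have hsq : (i + 1) * (x i - r * x (i + 1)) ^ 2 / n.choose i + (ψ (i + 1) - ψ i)
            - (1 + r ^ 2) * (x i ^ 2 / n.choose i)
          = ((n - i) * r * x i - (i + 1) * x (i + 1)) ^ 2 / (n.choose i * (n - i)) := by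
        simp only [ψ, hchoose]
        push_cast
        field_simp
        ring
      have : 0 ≤ ((n - i) * r * x i - (i + 1) * x (i + 1)) ^ 2 / (n.choose i * (n - i) : ℝ) := by
        positivity
      linarith
    · refine le_of_eq ?_
      simp only [ψ, hx, Nat.choose_succ_self, Nat.cast_zero, div_zero]
      field_simp
      ring
  have hψ0 : ψ 0 = -((n + 1) * (r * x 0) ^ 2) := by simp [ψ]; ring
  have hψn : ψ (n + 1) = 0 := by simp [ψ, hx]
  calc (1 + r ^ 2) * ∑ i ∈ range (n + 1), x i ^ 2 / n.choose i
      ≤ ∑ i ∈ range (n + 1),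
          ((i + 1) * (x i - r * x (i + 1)) ^ 2 / n.choose i + (ψ (i + 1) - ψ i)) := by
        rw [mul_sum]
        exact sum_le_sum step
    _ = _ := by rw [sum_add_distrib, sum_range_sub, hψ0, hψn]; ring

theorem weylNorm_nonneg (m : ℕ) (p : ℂ[X]) : 0 ≤ weylNorm m p := Real.sqrt_nonneg _

theorem weylNorm_sq (m : ℕ) (p : ℂ[X]) :
    weylNorm m p ^ 2 = ∑ i ∈ range (m + 1), ‖p.coeff i‖ ^ 2 / m.choose i :=
  Real.sq_sqrt (by positivity)

theorem weylNorm_C_mul (m : ℕ) (c : ℂ) (p : ℂ[X]) :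
    weylNorm m (C c * p) = ‖c‖ * weylNorm m p := by
  simp only [weylNorm, coeff_C_mul, norm_mul, mul_pow, mul_div_assoc, ← mul_sum]
  rw [Real.sqrt_mul (by positivity), Real.sqrt_sq (norm_nonneg c)]

theorem weylNorm_pos {m i : ℕ} {p : ℂ[X]} (hi : i ≤ m) (hp : p.coeff i ≠ 0) :
    0 < weylNorm m p := by
  refine Real.sqrt_pos.mpr <|
    sum_pos' (fun k _ => by positivity) ⟨i, mem_range_succ_iff.mpr hi, ?_⟩
  have : (0 : ℝ) < m.choose i := by exact_mod_cast Nat.choose_pos hi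
  positivity

theorem weylNorm_succ_le {n : ℕ} {p : ℂ[X]} (hp : p.natDegree ≤ n) :
    weylNorm (n + 1) p ≤ weylNorm n p := by
  refine Real.sqrt_le_sqrt ?_
  rw [sum_range_succ, coeff_eq_zero_of_natDegree_lt (Nat.lt_succ_of_le hp), norm_zero,
    zero_pow two_ne_zero, zero_div, add_zero]
  refine sum_le_sum fun i hi => div_le_div_of_nonneg_left (by positivity) ?_ ?_
  · exact_mod_cast Nat.choose_pos (mem_range_succ_iff.mp hi)
  · exact_mod_cast Nat.choose_le_succ n i

theorem add_one_mul_weylNorm_succ_sq (n : ℕ) (p : ℂ[X]) :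
    (n + 1) * weylNorm (n + 1) p ^ 2 = (n + 1) * ‖p.coeff 0‖ ^ 2 +
      ∑ i ∈ range (n + 1), (i + 1) * ‖p.coeff (i + 1)‖ ^ 2 / n.choose i := by
  rw [weylNorm_sq, sum_range_succ', mul_add, mul_sum, add_comm]
  congr 1
  · simp
  · refine sum_congr rfl fun i hi => ?_
    have hin := mem_range_succ_iff.mp hi
    have hc : (0 : ℝ) < n.choose i := by exact_mod_cast Nat.choose_pos hin
    have hc' : (0 : ℝ) < (n + 1).choose (i + 1) := by
      exact_mod_cast Nat.choose_pos (Nat.succ_le_succ hin)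
    have hrec : ((n + 1 : ℕ) : ℝ) * n.choose i = (n + 1).choose (i + 1) * (i + 1) := by
      exact_mod_cast Nat.add_one_mul_choose_eq n i
    push_cast at hrec ⊢
    field_simp
    linear_combination ‖p.coeff (i + 1)‖ ^ 2 * hrec

theorem one_add_sq_mul_weylNorm_sq_le {n : ℕ} {g : ℂ[X]} (hg : g.natDegree ≤ n) (z : ℂ) :
    (1 + ‖z‖ ^ 2) * weylNorm n g ^ 2 ≤ (n + 1) * weylNorm (n + 1) ((X - C z) * g) ^ 2 := by
  rw [weylNorm_sq, add_one_mul_weylNorm_succ_sq]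
  refine (one_add_sq_mul_sum_sq_div_choose_le n ‖z‖ (fun i => ‖g.coeff i‖)
    (by simp [coeff_eq_zero_of_natDegree_lt (Nat.lt_succ_of_le hg)])).trans ?_
  have hcoeff0 : ((X - C z) * g).coeff 0 = -(z * g.coeff 0) := by simp
  rw [hcoeff0, norm_neg, norm_mul]
  gcongr _ + ∑ i ∈ _, _ * ?_ / _ with i
  rw [coeff_X_sub_C_mul, ← norm_mul, sq_le_sq, abs_norm]
  exact abs_norm_sub_norm_le _ _

theorem norm_mul_weylNorm_le {n : ℕ} {g : ℂ[X]} (hg : g.natDegree ≤ n) (z : ℂ) :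
    ‖z‖ * weylNorm (n + 1) g ≤ √(n + 1) * weylNorm (n + 1) ((X - C z) * g) := by
  refine (pow_le_pow_iff_left₀ (mul_nonneg (norm_nonneg z) (weylNorm_nonneg _ _))
    (mul_nonneg (Real.sqrt_nonneg _) (weylNorm_nonneg _ _)) two_ne_zero).mp ?_
  rw [mul_pow, mul_pow, Real.sq_sqrt (by positivity)]
  calc ‖z‖ ^ 2 * weylNorm (n + 1) g ^ 2 ≤ (1 + ‖z‖ ^ 2) * weylNorm n g ^ 2 := by
        gcongr
        · linarith
        · exact weylNorm_nonneg _ _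
        · exact weylNorm_succ_le hg
    _ ≤ _ := one_add_sq_mul_weylNorm_sq_le hg z

theorem X_sub_C_mul_mem_SigmaG {g : ℂ[X]} (hg : g ≠ 0) {a w : ℂ} (ha : g.IsRoot a)
    (hwa : w ≠ a) (hw : ‖w‖ = ‖a‖) : (X - C w) * g ∈ SigmaG (g.natDegree + 1) :=
  ⟨by rw [natDegree_mul (X_sub_C_ne_zero w) hg, natDegree_X_sub_C, add_comm], w, a, hwa,
    root_mul_right_of_isRoot _ (root_X_sub_C.mpr rfl), root_mul_left_of_isRoot _ ha, hw⟩

theorem SigmaG_nonempty {d : ℕ} (hd : 2 ≤ d) : (SigmaG d).Nonempty := by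
  obtain ⟨n, rfl⟩ : ∃ n, d = n + 2 := ⟨d - 2, by omega⟩
  have h := X_sub_C_mul_mem_SigmaG (g := X ^ (n + 1) - C 1) (X_pow_sub_C_ne_zero n.succ_pos 1)
    (a := 1) (w := -1) (by simp) (by norm_num) (by simp)
  rw [natDegree_X_pow_sub_C] at h
  exact ⟨_, h⟩

-- With connectedness of `Circle`, this provides `closure_compl_singleton` on `Circle`.
instance : Nontrivial Circle :=
  ⟨⟨1, -1, fun h => by
    have := congrArg ((↑) : Circle → ℂ) h
    norm_num [Complex.ext_iff] at this⟩⟩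

theorem le_of_forall_norm_eq_of_ne {φ : ℂ → ℝ} (hφ : Continuous φ) {c : ℝ} {a u : ℂ}
    (ha : a ≠ 0) (hu : ‖u‖ = ‖a‖) (h : ∀ w, ‖w‖ = ‖a‖ → w ≠ a → c ≤ φ w) : c ≤ φ u := by
  have hclosed : IsClosed {s : Circle | c ≤ φ (s * a)} :=
    isClosed_le continuous_const (by fun_prop)
  have hsub : ({1}ᶜ : Set Circle) ⊆ {s | c ≤ φ (s * a)} := fun s hs =>
    h _ (by simp [Circle.norm_coe]) fun hsa =>
      hs (Circle.coe_eq_one.mp ((mul_eq_right₀ ha).mp hsa))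
  have hua : ‖u / a‖ = 1 := by rw [norm_div, hu, div_self (norm_ne_zero_iff.mpr ha)]
  have := hclosed.closure_subset_iff.mpr hsub (closure_compl_singleton (1 : Circle) ▸
    Set.mem_univ (⟨u / a, by simpa [Submonoid.unitSphere] using hua⟩ : Circle))
  change c ≤ φ (u / a * a) at this
  rwa [div_mul_cancel₀ u ha] at this

noncomputable def projDistSigmaG (d : ℕ) (f : ℂ[X]) : ℝ :=
  sInf {r : ℝ | ∃ h ∈ SigmaG d, ∃ lam : ℂ, r = weylNorm d (f - C lam * h) / weylNorm d f}

theorem projDistSigmaG_le {d : ℕ} (f : ℂ[X]) {h : ℂ[X]} (hh : h ∈ SigmaG d) (lam : ℂ) :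
    projDistSigmaG d f ≤ weylNorm d (f - C lam * h) / weylNorm d f := by
  refine csInf_le ⟨0, ?_⟩ ⟨h, hh, lam, rfl⟩
  rintro _ ⟨_, _, _, rfl⟩
  exact div_nonneg (weylNorm_nonneg _ _) (weylNorm_nonneg _ _)

theorem projDistSigmaG_le_one {d : ℕ} (hd : 2 ≤ d) (f : ℂ[X]) : projDistSigmaG d f ≤ 1 := by
  obtain ⟨h, hh⟩ := SigmaG_nonempty hd
  have := projDistSigmaG_le f hh 0
  rw [map_zero, zero_mul, sub_zero] at this
  exact this.trans (div_self_le_one _)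

theorem projDistSigmaG_X_sub_C_mul_le {g : ℂ[X]} (hg : g ≠ 0) {a : ℂ} (ha : g.IsRoot a)
    (ha0 : a ≠ 0) (z : ℂ) {u : ℂ} (hu : ‖u‖ = ‖a‖) :
    projDistSigmaG (g.natDegree + 1) ((X - C z) * g) ≤
      ‖u - z‖ * weylNorm (g.natDegree + 1) g / weylNorm (g.natDegree + 1) ((X - C z) * g) := by
  refine le_of_forall_norm_eq_of_ne (φ := fun w => ‖w - z‖ * weylNorm (g.natDegree + 1) g /
    weylNorm (g.natDegree + 1) ((X - C z) * g)) (by fun_prop) ha0 hu fun w hw hwa => ?_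
  have hdiff : (X - C z) * g - C 1 * ((X - C w) * g) = C (w - z) * g := by
    simp only [map_one, one_mul, map_sub]
    ring
  have := projDistSigmaG_le ((X - C z) * g) (X_sub_C_mul_mem_SigmaG hg ha hwa hw) 1
  rwa [hdiff, weylNorm_C_mul] at this

theorem projDistSigmaG_le_of_isRoot {g : ℂ[X]} (hg : g.Monic) {a z : ℂ} (ha : g.IsRoot a)
    (ha0 : a ≠ 0) (haz : ‖a‖ ≤ ‖z‖) :
    projDistSigmaG (g.natDegree + 1) ((X - C z) * g) ≤
      √(g.natDegree + 1 : ℕ) * (1 - ‖a‖ / ‖z‖) := by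
  set d := g.natDegree + 1
  set f := (X - C z) * g
  have hz : 0 < ‖z‖ := (norm_pos_iff.mpr ha0).trans_le haz
  have hF : 0 < weylNorm d f := by
    have hfd : f.natDegree = d := by
      rw [(monic_X_sub_C z).natDegree_mul hg, natDegree_X_sub_C, add_comm]
    refine weylNorm_pos le_rfl ?_
    rw [← hfd, ((monic_X_sub_C z).mul hg).coeff_natDegree]
    exact one_ne_zero
  set t := ‖a‖ / ‖z‖
  have ht : t ≤ 1 := div_le_one_of_le₀ haz hz.le
  have hu : ‖(t : ℂ) * z‖ = ‖a‖ := by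
    rw [norm_mul, Complex.norm_real, Real.norm_of_nonneg (by positivity), div_mul_cancel₀ _ hz.ne']
  have huz : ‖(t : ℂ) * z - z‖ = (1 - t) * ‖z‖ := by
    rw [← sub_one_mul, ← Complex.ofReal_one, ← Complex.ofReal_sub, norm_mul, Complex.norm_real,
      Real.norm_of_nonpos (by linarith), neg_sub]
  calc projDistSigmaG d f ≤ (1 - t) * ‖z‖ * weylNorm d g / weylNorm d f := by
        rw [← huz]; exact projDistSigmaG_X_sub_C_mul_le hg.ne_zero ha ha0 z hu
    _ ≤ (1 - t) * (√d * weylNorm d f) / weylNorm d f := by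
        rw [mul_assoc]
        gcongr (1 - t) * ?_ / _
        simpa [d] using norm_mul_weylNorm_le (le_refl g.natDegree) z
    _ = √d * (1 - t) := by field_simp

theorem projDistSigmaG_prod_le {d : ℕ} (hd : 2 ≤ d) (ζ : Fin d → ℂ) {i j : Fin d}
    (hij : ‖ζ i‖ < ‖ζ j‖) :
    projDistSigmaG d (∏ k, (X - C (ζ k))) ≤ √d * (1 - ‖ζ i‖ / ‖ζ j‖) := by
  rcases eq_or_ne (ζ i) 0 with hi | hi
  · rw [hi, norm_zero, zero_div, sub_zero, mul_one]
    refine (projDistSigmaG_le_one hd _).trans (Real.one_le_sqrt.mpr ?_)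
    exact_mod_cast hd.trans' one_le_two
  set g := ∏ k ∈ univ.erase j, (X - C (ζ k))
  have hg : g.Monic := monic_prod_of_monic _ _ fun k _ => monic_X_sub_C (ζ k)
  have hgd : g.natDegree + 1 = d := by
    rw [natDegree_prod_of_monic _ _ fun k _ => monic_X_sub_C (ζ k)]
    simp only [natDegree_X_sub_C, sum_const, smul_eq_mul, mul_one,
      card_erase_of_mem (mem_univ j), card_univ, Fintype.card_fin]
    omega
  have hroot : g.IsRoot (ζ i) := by
    rw [IsRoot, eval_prod]
    exact prod_eq_zero (mem_erase.mpr ⟨fun h => hij.ne (h ▸ rfl), mem_univ i⟩) (by simp)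
  rw [← mul_prod_erase univ _ (mem_univ j)]
  have := projDistSigmaG_le_of_isRoot hg hroot hi hij.le
  rwa [hgd] at this

/-- Condition Number Theorem for Graeffe iteration:
`ρ(f) ≥ d_P(f, Σ_G)/√d`, where `ρ(f) = min_{|ζᵢ|<|ζⱼ|} (1 - |ζᵢ|/|ζⱼ|)` and
`d_P(f, Σ_G) = inf_{h ∈ Σ_G, λ ∈ ℂ} ‖f - λh‖_d/‖f‖_d`. -/
theorem graeffe_condition_number (d : ℕ) (hd : 2 ≤ d) (ζ : Fin d → ℂ)
    (f : Polynomial ℂ) (hf : f = ∏ i, (X - C (ζ i)))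
    (hmod : ∀ i j : Fin d, i ≠ j → ‖ζ i‖ ≠ ‖ζ j‖) :
    sInf {r : ℝ | ∃ i j : Fin d, ‖ζ i‖ < ‖ζ j‖ ∧
        r = 1 - ‖ζ i‖ / ‖ζ j‖} ≥
      sInf {r : ℝ | ∃ h ∈ SigmaG d, ∃ lam : ℂ,
        r = weylNorm d (f - C lam * h) / weylNorm d f} / Real.sqrt d := by
  subst hf
  obtain ⟨i, j, hij⟩ : ∃ i j : Fin d, ‖ζ i‖ < ‖ζ j‖ := by
    rcases (hmod ⟨0, by omega⟩ ⟨1, by omega⟩ (by simp [Fin.ext_iff])).lt_or_gt with h | h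
    exacts [⟨_, _, h⟩, ⟨_, _, h⟩]
  refine le_csInf ⟨_, i, j, hij, rfl⟩ ?_
  rintro _ ⟨i, j, hij, rfl⟩
  rw [div_le_iff₀ (Real.sqrt_pos.mpr (by positivity)), mul_comm]
  exact projDistSigmaG_prod_le hd ζ hij
end

section
/- Let d and b be positive integers with d ≤ 2^b, and for fixed r ≤ d let S_k denote the set of r-element subsets of {1,...,d} with element sum r(r+1)/2 + k. Then Σ_{k≥1} 2^{-(b+1)k} · #S_k ≤ 2^{-b}. -/
/-!
An `r`-set of positive integers other than `{1, …, r}` contains some `i ≥ 2` with `i - 1`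
missing, and replacing `i` by `i - 1` lowers its sum by one. Hence every set in `S (k + 1)` is
obtained from a set in `S k` by raising one entry `i - 1` to `i`, so `#S (k + 1) ≤ d · #S k`.
Since the sum of an `r`-set of positive integers is at least `r (r + 1) / 2`, `S 0 ⊆ {{1, …, r}}`,
and then `S 1 ⊆ {{1, …, r - 1, r + 1}}`. Thus `#S (k + 1) ≤ d ^ k ≤ 2 ^ (b k)`, and the weighted
sum is dominated by `∑ₖ 2 ^ (-b - k - 1) = 2 ^ (-b)`.
-/

open Finset

/-- `S k`: the `r`-element subsets of `{1,…,d}` with element sum `r(r+1)/2 + k`. -/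
def multiIndexSet (d r k : ℕ) : Finset (Finset ℕ) :=
  ((Finset.Icc 1 d).powersetCard r).filter
    (fun s => ∑ x ∈ s, x = r * (r + 1) / 2 + k)

namespace Finset

theorem two_mul_sum_Icc_one (n : ℕ) : 2 * ∑ x ∈ Icc 1 n, x = n * (n + 1) := by
  induction n with
  | zero => simp
  | succ n ih =>
    rw [← insert_Icc_right_eq_Icc_add_one (by omega), sum_insert (by simp), mul_add, ih]
    ring

theorem card_lt_of_forall_mem_lt {t : Finset ℕ} {a : ℕ} (h0 : 0 ∉ t) (ha : a ≠ 0)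
    (hlt : ∀ x ∈ t, x < a) : #t < a := by
  have hsub : t ⊆ Ioo 0 a := fun x hx =>
    mem_Ioo.2 ⟨Nat.pos_of_ne_zero (ne_of_mem_of_not_mem hx h0), hlt x hx⟩
  have := card_le_card hsub
  rw [Nat.card_Ioo] at this
  omega

theorem card_mul_card_add_one_le_two_mul_sum {s : Finset ℕ} (h0 : 0 ∉ s) :
    #s * (#s + 1) ≤ 2 * ∑ x ∈ s, x := by
  induction s using Finset.induction_on_max with
  | empty => simp
  | insert a t hlt ih =>
    have hat : a ∉ t := fun h => (hlt a h).false
    obtain ⟨ha, ht0⟩ := not_or.1 (mt mem_insert.2 h0)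
    have hta : #t < a := card_lt_of_forall_mem_lt ht0 (Ne.symm ha) hlt
    have := ih ht0
    rw [card_insert_of_notMem hat, sum_insert hat]
    nlinarith

theorem exists_mem_sub_one_notMem {s : Finset ℕ} (h0 : 0 ∉ s) (hs : s ≠ Icc 1 #s) :
    ∃ i ∈ s, 2 ≤ i ∧ i - 1 ∉ s := by
  induction s using Finset.induction_on_max with
  | empty => simp at hs
  | insert a t hlt ih =>
    have hat : a ∉ t := fun h => (hlt a h).false
    obtain ⟨ha, ht0⟩ := not_or.1 (mt mem_insert.2 h0)
    have hta : #t < a := card_lt_of_forall_mem_lt ht0 (Ne.symm ha) hlt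
    by_cases ht : t = Icc 1 #t
    · have hta' : a ≠ #t + 1 := by
        rintro rfl
        rw [card_insert_of_notMem hat, ht, Nat.card_Icc, Nat.add_sub_cancel,
          insert_Icc_right_eq_Icc_add_one (by omega)] at hs
        exact hs rfl
      refine ⟨a, mem_insert_self a t, by omega, ?_⟩
      rw [mem_insert, ht, mem_Icc]
      omega
    · obtain ⟨i, hi, hi2, hi1⟩ := ih ht0 ht
      refine ⟨i, mem_insert_of_mem hi, hi2, ?_⟩
      have := hlt i hi
      rw [mem_insert, not_or]
      exact ⟨by omega, hi1⟩

variable {s : Finset ℕ} {i : ℕ}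

theorem card_insert_sub_one_erase (hi : i ∈ s) (hi1 : i - 1 ∉ s) :
    #(insert (i - 1) (s.erase i)) = #s := by
  rw [card_insert_of_notMem fun h => hi1 (mem_of_mem_erase h), card_erase_add_one hi]

theorem sum_insert_sub_one_erase_add_one (hi : i ∈ s) (hi1 : i - 1 ∉ s) (hi0 : 0 < i) :
    ∑ x ∈ insert (i - 1) (s.erase i), x + 1 = ∑ x ∈ s, x := by
  rw [sum_insert fun h => hi1 (mem_of_mem_erase h), ← sum_erase_add _ _ hi]
  omega

theorem insert_erase_insert_sub_one_erase (hi : i ∈ s) (hi1 : i - 1 ∉ s) :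
    insert i ((insert (i - 1) (s.erase i)).erase (i - 1)) = s := by
  rw [erase_insert fun h => hi1 (mem_of_mem_erase h), insert_erase hi]

end Finset

section multiIndexSet

variable {d r k : ℕ} {s : Finset ℕ}

theorem mem_multiIndexSet : s ∈ multiIndexSet d r k ↔
    s ⊆ Icc 1 d ∧ #s = r ∧ ∑ x ∈ s, x = r * (r + 1) / 2 + k := by
  simp [multiIndexSet, and_assoc]

theorem zero_notMem_of_mem_multiIndexSet (hs : s ∈ multiIndexSet d r k) : 0 ∉ s :=
  fun h => by simpa using (mem_multiIndexSet.1 hs).1 h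

theorem multiIndexSet_zero_subset : multiIndexSet d r 0 ⊆ {Icc 1 r} := by
  intro s hs
  obtain ⟨-, hcard, hsum⟩ := mem_multiIndexSet.1 hs
  have h0 := zero_notMem_of_mem_multiIndexSet hs
  by_contra hne
  obtain ⟨i, hi, hi2, hi1⟩ := exists_mem_sub_one_notMem h0 (by simpa [hcard] using hne)
  have hlow := card_mul_card_add_one_le_two_mul_sum (s := insert (i - 1) (s.erase i))
    (by simp [h0]; omega)
  rw [card_insert_sub_one_erase hi hi1, hcard] at hlow
  have := sum_insert_sub_one_erase_add_one hi hi1 (by omega)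
  have := Nat.div_mul_cancel (Nat.even_mul_succ_self r).two_dvd
  omega

theorem exists_eq_insert_erase_of_mem_multiIndexSet (hs : s ∈ multiIndexSet d r (k + 1)) :
    ∃ t ∈ multiIndexSet d r k, ∃ i ∈ Icc 1 d, i ∉ t ∧ i - 1 ∈ t ∧
      s = insert i (t.erase (i - 1)) := by
  obtain ⟨hsub, hcard, hsum⟩ := mem_multiIndexSet.1 hs
  have hne : s ≠ Icc 1 #s := by
    rw [hcard]
    rintro rfl
    have := two_mul_sum_Icc_one r
    omega
  obtain ⟨i, hi, hi2, hi1⟩ :=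
    exists_mem_sub_one_notMem (zero_notMem_of_mem_multiIndexSet hs) hne
  have hid := mem_Icc.1 (hsub hi)
  refine ⟨insert (i - 1) (s.erase i), ?_, i, hsub hi, ?_, mem_insert_self _ _,
    (insert_erase_insert_sub_one_erase hi hi1).symm⟩
  · refine mem_multiIndexSet.2 ⟨?_, card_insert_sub_one_erase hi hi1 ▸ hcard, ?_⟩
    · refine insert_subset (mem_Icc.2 ⟨by omega, by omega⟩) ((erase_subset _ _).trans hsub)
    · have := sum_insert_sub_one_erase_add_one hi hi1 (by omega)
      omega
  · simp only [mem_insert, mem_erase, not_or]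
    omega

theorem card_multiIndexSet_succ_le (k : ℕ) :
    #(multiIndexSet d r (k + 1)) ≤ d * #(multiIndexSet d r k) := by
  have : multiIndexSet d r (k + 1) ⊆
      (multiIndexSet d r k ×ˢ Icc 1 d).image fun p => insert p.2 (p.1.erase (p.2 - 1)) := by
    intro s hs
    obtain ⟨t, ht, i, hi, -, -, rfl⟩ := exists_eq_insert_erase_of_mem_multiIndexSet hs
    exact mem_image.2 ⟨(t, i), mem_product.2 ⟨ht, hi⟩, rfl⟩
  calc #(multiIndexSet d r (k + 1)) ≤ #(multiIndexSet d r k ×ˢ Icc 1 d) :=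
        (card_le_card this).trans card_image_le
    _ = d * #(multiIndexSet d r k) := by
        rw [card_product, Nat.card_Icc, Nat.add_sub_cancel, mul_comm]

theorem card_multiIndexSet_one_le : #(multiIndexSet d r 1) ≤ 1 := by
  refine card_le_one.2 fun s hs s' hs' => ?_
  suffices ∀ s ∈ multiIndexSet d r 1, s = insert (r + 1) ((Icc 1 r).erase r) by
    rw [this s hs, this s' hs']
  intro s hs
  obtain ⟨t, ht, i, -, hit, hi1t, rfl⟩ := exists_eq_insert_erase_of_mem_multiIndexSet hs
  obtain rfl := mem_singleton.1 (multiIndexSet_zero_subset ht)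
  rw [mem_Icc] at hit hi1t
  obtain rfl : i = r + 1 := by omega
  rfl

theorem card_multiIndexSet_succ_le_pow (k : ℕ) : #(multiIndexSet d r (k + 1)) ≤ d ^ k := by
  induction k with
  | zero => simpa using card_multiIndexSet_one_le
  | succ k ih =>
    calc #(multiIndexSet d r (k + 1 + 1)) ≤ d * #(multiIndexSet d r (k + 1)) :=
          card_multiIndexSet_succ_le _
      _ ≤ d * d ^ k := Nat.mul_le_mul_left d ih
      _ = d ^ (k + 1) := (pow_succ' d k).symm

end multiIndexSet

theorem tsum_two_rpow_mul_le (b : ℕ) {a : ℕ → ℝ} (ha0 : ∀ k, 0 ≤ a k)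
    (ha : ∀ k, a k ≤ 2 ^ (b * k)) :
    ∑' k : ℕ, (2 : ℝ) ^ (-((b : ℝ) + 1) * ((k : ℝ) + 1)) * a k ≤ (2 : ℝ) ^ (-(b : ℝ)) := by
  set w : ℕ → ℝ := fun k => (2 : ℝ) ^ (-((b : ℝ) + 1) * ((k : ℝ) + 1))
  have hterm (k : ℕ) : w k * a k ≤ (2 : ℝ) ^ (-(b : ℝ)) / 2 / 2 ^ k :=
    calc w k * a k ≤ w k * 2 ^ (b * k) := by gcongr; exact ha k
      _ = (2 : ℝ) ^ (-(b : ℝ)) / 2 / 2 ^ k := by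
        rw [div_div, ← pow_succ', ← Real.rpow_natCast _ (k + 1), ← Real.rpow_natCast _ (b * k),
          ← Real.rpow_add two_pos, ← Real.rpow_sub two_pos]
        push_cast
        ring_nf
  have hsum : Summable fun k => w k * a k :=
    (summable_geometric_two' _).of_nonneg_of_le (fun k => by have := ha0 k; positivity) hterm
  exact hasSum_le hterm hsum.hasSum (hasSum_geometric_two' _)

theorem multiIndexSet_weighted_sum_le_general (d r b : ℕ) (hd : d ≤ 2 ^ b) :
    ∑' k : ℕ, (2 : ℝ) ^ (-(((b : ℝ) + 1)) * ((k : ℝ) + 1)) *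
        (multiIndexSet d r (k + 1)).card ≤ (2 : ℝ) ^ (-(b : ℝ)) := by
  refine tsum_two_rpow_mul_le b (a := fun k => (#(multiIndexSet d r (k + 1)) : ℝ))
    (fun _ => Nat.cast_nonneg _) fun k => ?_
  have : #(multiIndexSet d r (k + 1)) ≤ 2 ^ (b * k) :=
    calc #(multiIndexSet d r (k + 1)) ≤ d ^ k := card_multiIndexSet_succ_le_pow k
      _ ≤ (2 ^ b) ^ k := Nat.pow_le_pow_left hd k
      _ = 2 ^ (b * k) := (pow_mul 2 b k).symm
  exact_mod_cast this

/-- If `1 ≤ b` and `d ≤ 2^b` then `∑_{k≥1} 2^{-(b+1)k} #S_k ≤ 2^{-b}`. -/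
theorem multiIndexSet_weighted_sum_le (d r b : ℕ)
    (hb : 1 ≤ b) (hd : d ≤ 2 ^ b) (hr1 : 1 ≤ r) (hrd : r ≤ d) :
    ∑' k : ℕ, (2 : ℝ) ^ (-(((b : ℝ) + 1)) * ((k : ℝ) + 1)) *
        (multiIndexSet d r (k + 1)).card ≤ (2 : ℝ) ^ (-(b : ℝ)) :=
  multiIndexSet_weighted_sum_le_general d r b hd
end
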